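/- arXiv:1603.04017 — 2 statements merged into one kernel-verified Lean document; each statement's English description precedes it below -/
import Mathlib

section
/- For any nonnegative reals D_{ik}, D_{jk}, D_{ij} and any Lance-Williams update with α_i, α_j ≥ 0, α_i + α_j = 1, β = 0, and |γ| ≤ min(α_i, α_j), the updated distance D(C_i ∪ C_j, C_k) = α_i D_{ik} + α_j D_{jk} + γ|D_{ik} - D_{jk}| lies in the closed interval [min(D_{ik}, D_{jk}), max(D_{ik}, D_{jk})]. -/
/-- Semi-space-conserving Lance-Williams updates (β = 0, α_i + α_j = 1, |γ| ≤ min α)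
keep the merged distance between the two pre-merge distances. -/
theorem lance_williams_semi_space_conserving
    (Dik Djk Dij : ℝ) (hik : 0 ≤ Dik) (hjk : 0 ≤ Djk) (hij : 0 ≤ Dij)
    (αi αj γ : ℝ) (hαi : 0 ≤ αi) (hαj : 0 ≤ αj) (hsum : αi + αj = 1)
    (hγ : |γ| ≤ min αi αj) :
    αi * Dik + αj * Djk + γ * |Dik - Djk| ∈ Set.Icc (min Dik Djk) (max Dik Djk) := by
  have h1 : |γ| ≤ αi := le_trans hγ (min_le_left _ _)
  have h2 : |γ| ≤ αj := le_trans hγ (min_le_right _ _)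
  have hg1 : -αi ≤ γ ∧ γ ≤ αi := abs_le.mp h1
  have hg2 : -αj ≤ γ ∧ γ ≤ αj := abs_le.mp h2
  constructor
  · rcases le_total Dik Djk with h | h
    · rw [min_eq_left h, abs_of_nonpos (by linarith)]; nlinarith [hg1.1, hg1.2, hg2.1, hg2.2]
    · rw [min_eq_right h, abs_of_nonneg (by linarith)]; nlinarith [hg1.1, hg1.2, hg2.1, hg2.2]
  · rcases le_total Dik Djk with h | h
    · rw [max_eq_right h, abs_of_nonpos (by linarith)]; nlinarith [hg1.1, hg1.2, hg2.1, hg2.2]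
    · rw [max_eq_left h, abs_of_nonneg (by linarith)]; nlinarith [hg1.1, hg1.2, hg2.1, hg2.2]
end

section
/- Let d be a distance function on a finite set of points partitioned into clusters by a map C. Suppose a linkage agglomerative hierarchical algorithm is space-conserving, i.e., at every step the distance between any two current clusters A, B lies in [min_{x∈A, y∈B} d(x,y), max_{x∈A, y∈B} d(x,y)]. If max over pairs in the same cluster of d(X_i, X_j) is strictly less than min over pairs in different clusters of d(X_i, X_j), then at every step of the algorithm, the minimum current inter-cluster-merge distance between sub-clusters of the same true cluster is strictly less than any distance between sub-clusters of different true clusters; consequently the algorithm never merges sub-clusters from different true clusters and recovers the partition. -/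
open Finset in
/-- Space-conserving linkage algorithms recover the true clusters under the
separability condition: if every intra-cluster distance is strictly smaller than
every inter-cluster distance, then an agglomerative algorithm that starts from
singletons, always merges a pair of current clusters with minimal linkage distance,
and whose linkage `D` is space-conserving (bounded between the min and max pointwise
distances), never merges sub-clusters of different true clusters: every current
cluster at every step is contained in a single true cluster. -/
theorem space_conserving_recovers_partition
    {ι κ : Type*} [Fintype ι] [DecidableEq ι]
    (d : ι → ι → ℝ) (C : ι → κ)
    (hsep : ∀ i j k l : ι, C i = C j → C k ≠ C l → d i j < d k l)
    (D : Finset ι → Finset ι → ℝ)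
    (hspace : ∀ A B : Finset ι, A.Nonempty → B.Nonempty →
      (∃ x ∈ A, ∃ y ∈ B, d x y ≤ D A B) ∧ (∃ x ∈ A, ∃ y ∈ B, D A B ≤ d x y))
    (steps : ℕ) (P : ℕ → Finset (Finset ι))
    (hP0 : P 0 = Finset.univ.image (fun i => ({i} : Finset ι)))
    (hintra_exists : ∀ s < steps, ∃ A ∈ P s, ∃ B ∈ P s, A ≠ B ∧
      ∀ i ∈ A, ∀ j ∈ B, C i = C j)
    (hstep : ∀ s < steps, ∃ A ∈ P s, ∃ B ∈ P s, A ≠ B ∧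
      (∀ A' ∈ P s, ∀ B' ∈ P s, A' ≠ B' → D A B ≤ D A' B') ∧
      P (s + 1) = insert (A ∪ B) (((P s).erase A).erase B)) :
    (∀ s ≤ steps, ∀ Q ∈ P s, ∀ i ∈ Q, ∀ j ∈ Q, C i = C j)
    ∧ (∀ s ≤ steps, ∀ A ∈ P s, ∀ B ∈ P s, A.Nonempty → B.Nonempty → A ≠ B →
        (∀ i ∈ A, ∀ j ∈ B, C i = C j) →
        ∀ A' ∈ P s, ∀ B' ∈ P s, A'.Nonempty → B'.Nonempty →
          (∃ i ∈ A', ∃ j ∈ B', C i ≠ C j) → D A B < D A' B') := by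
  have key : ∀ A B A' B' : Finset ι, A.Nonempty → B.Nonempty → A'.Nonempty → B'.Nonempty →
      (∀ i ∈ A, ∀ j ∈ B, C i = C j) →
      (∀ i ∈ A', ∀ j ∈ A', C i = C j) → (∀ i ∈ B', ∀ j ∈ B', C i = C j) →
      (∃ i ∈ A', ∃ j ∈ B', C i ≠ C j) → D A B < D A' B' := by
    intro A B A' B' hA hB hA' hB' hpure hpA hpB hcr
    obtain ⟨i, hi, j, hj, hij⟩ := hcr
    obtain ⟨x, hx, y, hy, hxy⟩ := (hspace A B hA hB).2
    obtain ⟨x', hx', y', hy', hxy'⟩ := (hspace A' B' hA' hB').1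
    have h1 : C x = C y := hpure x hx y hy
    have h2 : C x' ≠ C y' := fun h => hij ((hpA i hi x' hx').trans (h.trans (hpB y' hy' j hj)))
    calc D A B ≤ d x y := hxy
      _ < d x' y' := hsep x y x' y' h1 h2
      _ ≤ D A' B' := hxy'
  have main : ∀ s ≤ steps, (∀ Q ∈ P s, Q.Nonempty) ∧
      (∀ Q ∈ P s, ∀ i ∈ Q, ∀ j ∈ Q, C i = C j) := by
    intro s
    induction s with
    | zero =>
      intro _
      constructor
      · intro Q hQ
        rw [hP0] at hQ
        obtain ⟨i, -, rfl⟩ := Finset.mem_image.mp hQ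
        exact ⟨i, Finset.mem_singleton_self i⟩
      · intro Q hQ i hi j hj
        rw [hP0] at hQ
        obtain ⟨k, -, rfl⟩ := Finset.mem_image.mp hQ
        rw [Finset.mem_singleton] at hi hj
        rw [hi, hj]
    | succ s ih =>
      intro hs
      have hslt : s < steps := hs
      have ihs := ih (le_of_lt hslt)
      obtain ⟨A, hA, B, hB, hAB, hmin, hPs⟩ := hstep s hslt
      have hmem : ∀ Q ∈ P (s+1), Q = A ∪ B ∨ Q ∈ P s := by
        intro Q hQ
        rw [hPs] at hQ
        rcases Finset.mem_insert.mp hQ with h | h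
        · exact Or.inl h
        · exact Or.inr (Finset.mem_of_mem_erase (Finset.mem_of_mem_erase h))
      have hABpure : ∀ i ∈ A, ∀ j ∈ B, C i = C j := by
        by_contra hcon
        push_neg at hcon
        obtain ⟨i, hi, j, hj, hij⟩ := hcon
        obtain ⟨A₀, hA₀, B₀, hB₀, hne₀, hp₀⟩ := hintra_exists s hslt
        have := key A₀ B₀ A B (ihs.1 A₀ hA₀) (ihs.1 B₀ hB₀) (ihs.1 A hA) (ihs.1 B hB)
          hp₀ (fun a ha b hb => ihs.2 A hA a ha b hb) (fun a ha b hb => ihs.2 B hB a ha b hb)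
          ⟨i, hi, j, hj, hij⟩
        exact absurd (hmin A₀ hA₀ B₀ hB₀ hne₀) (not_le.mpr this)
      constructor
      · intro Q hQ
        rcases hmem Q hQ with rfl | h
        · exact (ihs.1 A hA).mono Finset.subset_union_left
        · exact ihs.1 Q h
      · intro Q hQ i hi j hj
        rcases hmem Q hQ with rfl | h
        · rcases Finset.mem_union.mp hi with hiA | hiB <;>
            rcases Finset.mem_union.mp hj with hjA | hjB
          · exact ihs.2 A hA i hiA j hjA
          · exact hABpure i hiA j hjB
          · exact (hABpure j hjA i hiB).symm
          · exact ihs.2 B hB i hiB j hjB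
        · exact ihs.2 Q h i hi j hj
  refine ⟨fun s hs => (main s hs).2, ?_⟩
  intro s hs A hA B hB hAne hBne hABne hpure A' hA' B' hB' hA'ne hB'ne hcross
  exact key A B A' B' hAne hBne hA'ne hB'ne hpure
    (fun a ha b hb => (main s hs).2 A' hA' a ha b hb)
    (fun a ha b hb => (main s hs).2 B' hB' a ha b hb) hcross
end
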